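/- Let E_θ: ℝ^{d_x} → ℝ be an energy function with Z_θ = ∫ exp(−E_θ(x)) dx < ∞ and π_θ(x) = exp(−E_θ(x))/Z_θ, and let E₀: ℝ^{d_x} → ℝ be a fixed reference energy with Z₀ = ∫ exp(−E₀(x)) dx < ∞ and π₀(x) = exp(−E₀(x))/Z₀, with KL(π_θ ‖ π₀) < ∞. Fix θ and assume differentiability of θ′ ↦ E_{θ′}(x) at θ for every x together with domination hypotheses permitting differentiation under the integral sign for Z_{θ′} and for θ′ ↦ ∫ (E₀(x) − E_{θ′}(x)) π_{θ′}(x) dx, with (E_θ − E₀)∇_θE_θ and ∇_θE_θ integrable under π_θ. Then ∇_θ KL(π_θ ‖ π₀) = E_{π_θ}[ (E_θ(X) − E₀(X)) ∇_θE_θ(X) ] − E_{π_θ}[E_θ(X) − E₀(X)] · E_{π_θ}[∇_θE_θ(X)]. -/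

import Mathlib

/-! Write `Z t = ∫ exp (-E_t)` and `G t = ∫ (E₀ - E_t) exp (-E_t)`. Since
`log (π_t / π₀) = E₀ - E_t - log Z t + log Z₀` and `π_t` integrates to one,
`KL(π_t ‖ π₀) = G t / Z t - log Z t + log Z₀`. The domination hypotheses allow differentiating
`Z` and `G` under the integral sign, and the quotient rule for `G / Z` minus the logarithmic
derivative of `Z` collapses, after dividing every integral by `Z θ`, to the covariance of
`E_θ - E₀` and `∇E_θ` under `π_θ`. -/

open MeasureTheory

noncomputable section

/-- The energy-based probability density `π_θ(x) = exp(−E_θ(x))/Z_θ`. -/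
def ebmDensity {dx dθ : ℕ}
    (En : EuclideanSpace ℝ (Fin dθ) → EuclideanSpace ℝ (Fin dx) → ℝ)
    (t : EuclideanSpace ℝ (Fin dθ)) (x : EuclideanSpace ℝ (Fin dx)) : ℝ :=
  Real.exp (-En t x) / ∫ y, Real.exp (-En t y)

/-- A fixed reference energy-based density `π₀(x) = exp(−E₀(x))/Z₀`. -/
def refDensity {dx : ℕ} (E₀ : EuclideanSpace ℝ (Fin dx) → ℝ)
    (x : EuclideanSpace ℝ (Fin dx)) : ℝ :=
  Real.exp (-E₀ x) / ∫ y, Real.exp (-E₀ y)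

open Filter Topology Real InnerProductSpace

section Measurability

variable {α E F : Type*} [MeasurableSpace α] [NormedAddCommGroup E] [NormedSpace ℝ E]
  [NormedAddCommGroup F] [NormedSpace ℝ F] [MeasurableSpace F] [BorelSpace F]
  [SecondCountableTopology F]

theorem measurable_clm_apply [FiniteDimensional ℝ E] {f : α → E →L[ℝ] F} :
    Measurable f ↔ ∀ y, Measurable (f · y) := by
  refine ⟨fun h y ↦ (ContinuousLinearMap.apply ℝ F y).continuous.measurable.comp h, fun h ↦ ?_⟩
  let e : (E →L[ℝ] F) ≃L[ℝ] Fin (Module.finrank ℝ E) → F :=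
    ((ContinuousLinearEquiv.ofFinrankEq (Module.finrank_fin_fun ℝ).symm).arrowCongr
      (1 : F ≃L[ℝ] F)).trans (ContinuousLinearEquiv.piRing _)
  have : Measurable (e ∘ f) := measurable_pi_iff.mpr fun i ↦ h _
  simpa [Function.comp_def] using e.symm.continuous.measurable.comp this

theorem measurable_fderiv_apply_of_measurable {f : E → α → F} (hf : ∀ t, Measurable (f t))
    {θ : E} (hd : ∀ x, DifferentiableAt ℝ (f · x) θ) (v : E) :
    Measurable fun x ↦ fderiv ℝ (f · x) θ v := by
  have hc : Tendsto (fun n : ℕ ↦ ‖(n : ℝ)‖) atTop atTop := by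
    simpa using tendsto_natCast_atTop_atTop
  refine measurable_of_tendsto_metrizable
    (f := fun (n : ℕ) x ↦ (n : ℝ) • (f (θ + (n : ℝ)⁻¹ • v) x - f θ x))
    (fun n ↦ ((hf _).sub (hf θ)).const_smul _) (tendsto_pi_nhds.mpr fun x ↦ ?_)
  exact (hd x).hasFDerivAt.lim v hc

theorem measurable_fderiv_of_measurable [FiniteDimensional ℝ E] {f : E → α → F}
    (hf : ∀ t, Measurable (f t)) {θ : E} (hd : ∀ x, DifferentiableAt ℝ (f · x) θ) :
    Measurable fun x ↦ fderiv ℝ (f · x) θ :=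
  measurable_clm_apply.mpr (measurable_fderiv_apply_of_measurable hf hd)

end Measurability

section ParametricGibbs

variable {α P : Type*} [MeasurableSpace α] {μ : Measure α}
  [NormedAddCommGroup P] [NormedSpace ℝ P]
  {E : P → α → ℝ} {E₀ : α → ℝ} {θ : P} {s : Set P} {g : α → ℝ}

theorem hasFDerivAt_integral_exp_neg (hs : s ∈ 𝓝 θ)
    (hint : ∀ t ∈ s, Integrable (fun x ↦ exp (-E t x)) μ)
    (hD : AEStronglyMeasurable (fun x ↦ fderiv ℝ (E · x) θ) μ)
    (hdiff : ∀ x, ∀ t ∈ s, DifferentiableAt ℝ (E · x) t) (hg : Integrable g μ)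
    (hbound : ∀ t ∈ s, ∀ x, ‖fderiv ℝ (E · x) t‖ * exp (-E t x) ≤ g x) :
    HasFDerivAt (fun t ↦ ∫ x, exp (-E t x) ∂μ)
      (-∫ x, exp (-E θ x) • fderiv ℝ (E · x) θ ∂μ) θ := by
  rw [← integral_neg]
  refine hasFDerivAt_integral_of_dominated_of_fderiv_le (bound := g)
    (F' := fun t x ↦ -(exp (-E t x) • fderiv ℝ (E · x) t)) hs
    (eventually_of_mem hs fun t ht ↦ (hint t ht).aestronglyMeasurable)
    (hint θ (mem_of_mem_nhds hs)) ?_ (.of_forall fun x t ht ↦ ?_) hg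
    (.of_forall fun x t ht ↦ ?_)
  · exact ((hint θ (mem_of_mem_nhds hs)).aestronglyMeasurable.smul hD).neg
  · simpa [norm_smul, mul_comm] using hbound t ht x
  · simpa using ((hdiff x t ht).hasFDerivAt.neg).exp

theorem hasFDerivAt_integral_sub_mul_exp_neg (hs : s ∈ 𝓝 θ)
    (hint : ∀ t ∈ s, Integrable (fun x ↦ (E₀ x - E t x) * exp (-E t x)) μ)
    (hE₀ : AEStronglyMeasurable E₀ μ) (hEθ : AEStronglyMeasurable (E θ) μ)
    (hD : AEStronglyMeasurable (fun x ↦ fderiv ℝ (E · x) θ) μ)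
    (hdiff : ∀ x, ∀ t ∈ s, DifferentiableAt ℝ (E · x) t) (hg : Integrable g μ)
    (hbound : ∀ t ∈ s, ∀ x,
      (1 + |E₀ x - E t x|) * ‖fderiv ℝ (E · x) t‖ * exp (-E t x) ≤ g x) :
    HasFDerivAt (fun t ↦ ∫ x, (E₀ x - E t x) * exp (-E t x) ∂μ)
      (∫ x, ((E θ x - E₀ x - 1) * exp (-E θ x)) • fderiv ℝ (E · x) θ ∂μ) θ := by
  refine hasFDerivAt_integral_of_dominated_of_fderiv_le (bound := g)
    (F' := fun t x ↦ ((E t x - E₀ x - 1) * exp (-E t x)) • fderiv ℝ (E · x) t) hs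
    (eventually_of_mem hs fun t ht ↦ (hint t ht).aestronglyMeasurable)
    (hint θ (mem_of_mem_nhds hs)) ?_ (.of_forall fun x t ht ↦ ?_) hg
    (.of_forall fun x t ht ↦ ?_)
  · exact (((hEθ.sub hE₀).sub aestronglyMeasurable_const).mul
      (continuous_exp.comp_aestronglyMeasurable hEθ.neg)).smul hD
  · calc _ = |E t x - E₀ x - 1| * ‖fderiv ℝ (E · x) t‖ * exp (-E t x) := by
          rw [norm_smul, Real.norm_eq_abs, abs_mul, abs_exp]; ring
      _ ≤ (1 + |E₀ x - E t x|) * ‖fderiv ℝ (E · x) t‖ * exp (-E t x) := by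
          gcongr
          rw [abs_sub_comm (E₀ x)]
          exact (abs_sub _ _).trans_eq (by rw [abs_one, add_comm])
      _ ≤ g x := hbound t ht x
  · have hE := (hdiff x t ht).hasFDerivAt
    refine ((hE.const_sub (E₀ x)).fun_mul hE.fun_neg.exp).congr_fderiv ?_
    ext v
    simp only [smul_neg, add_apply, neg_apply, smul_apply, smul_eq_mul]
    ring

/-- The function differentiated here is `KL(π_t ‖ π₀) - log Z₀`. -/
theorem hasFDerivAt_integral_sub_mul_exp_neg_div_sub_log [NeZero μ] {g₁ g₂ : α → ℝ}
    (hs : s ∈ 𝓝 θ) (hZ : ∀ t ∈ s, Integrable (fun x ↦ exp (-E t x)) μ)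
    (hint : ∀ t ∈ s, Integrable (fun x ↦ (E₀ x - E t x) * exp (-E t x)) μ)
    (hE₀ : AEStronglyMeasurable E₀ μ) (hEθ : AEStronglyMeasurable (E θ) μ)
    (hD : AEStronglyMeasurable (fun x ↦ fderiv ℝ (E · x) θ) μ)
    (hdiff : ∀ x, ∀ t ∈ s, DifferentiableAt ℝ (E · x) t)
    (hg₁ : Integrable g₁ μ) (hg₂ : Integrable g₂ μ)
    (hbound₁ : ∀ t ∈ s, ∀ x, ‖fderiv ℝ (E · x) t‖ * exp (-E t x) ≤ g₁ x)
    (hbound₂ : ∀ t ∈ s, ∀ x,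
      (1 + |E₀ x - E t x|) * ‖fderiv ℝ (E · x) t‖ * exp (-E t x) ≤ g₂ x) :
    HasFDerivAt
      (fun t ↦ (∫ x, (E₀ x - E t x) * exp (-E t x) ∂μ) / (∫ x, exp (-E t x) ∂μ) -
        log (∫ x, exp (-E t x) ∂μ))
      ((∫ x, ((E θ x - E₀ x) * (exp (-E θ x) / ∫ y, exp (-E θ y) ∂μ)) •
          fderiv ℝ (E · x) θ ∂μ) -
        (∫ x, (E θ x - E₀ x) * (exp (-E θ x) / ∫ y, exp (-E θ y) ∂μ) ∂μ) •
          ∫ x, (exp (-E θ x) / ∫ y, exp (-E θ y) ∂μ) • fderiv ℝ (E · x) θ ∂μ) θ := by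
  have hθ : θ ∈ s := mem_of_mem_nhds hs
  set Z := ∫ y, exp (-E θ y) ∂μ
  set D := fun x ↦ fderiv ℝ (E · x) θ
  set I₀ := ∫ x, exp (-E θ x) • D x ∂μ
  set I₁ := ∫ x, ((E θ x - E₀ x) * exp (-E θ x)) • D x ∂μ
  set c := ∫ x, (E θ x - E₀ x) * exp (-E θ x) ∂μ
  have hZ_pos : 0 < Z := integral_exp_pos (hZ θ hθ)
  have hexp_meas : AEStronglyMeasurable (fun x ↦ exp (-E θ x)) μ :=
    continuous_exp.comp_aestronglyMeasurable hEθ.neg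
  have hI₀ : Integrable (fun x ↦ exp (-E θ x) • D x) μ := by
    refine hg₁.mono' (hexp_meas.smul hD) (.of_forall fun x ↦ ?_)
    simpa [norm_smul, mul_comm] using hbound₁ θ hθ x
  have hI₁ : Integrable (fun x ↦ ((E θ x - E₀ x) * exp (-E θ x)) • D x) μ := by
    refine hg₂.mono' (((hEθ.sub hE₀).mul hexp_meas).smul hD) (.of_forall fun x ↦ ?_)
    calc _ = |E₀ x - E θ x| * ‖D x‖ * exp (-E θ x) := by
          rw [norm_smul, Real.norm_eq_abs, abs_mul, abs_exp, abs_sub_comm]; ring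
      _ ≤ (1 + |E₀ x - E θ x|) * ‖D x‖ * exp (-E θ x) := by gcongr; linarith
      _ ≤ g₂ x := hbound₂ θ hθ x
  have hZ' : HasFDerivAt (fun t ↦ ∫ x, exp (-E t x) ∂μ) (-I₀) θ :=
    hasFDerivAt_integral_exp_neg hs hZ hD hdiff hg₁ hbound₁
  have hG' : HasFDerivAt (fun t ↦ ∫ x, (E₀ x - E t x) * exp (-E t x) ∂μ) (I₁ - I₀) θ := by
    convert hasFDerivAt_integral_sub_mul_exp_neg hs hint hE₀ hEθ hD hdiff hg₂ hbound₂ using 1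
    rw [← integral_sub hI₁ hI₀]
    simp only [sub_one_mul, sub_smul]
    rfl
  have hG : ∫ x, (E₀ x - E θ x) * exp (-E θ x) ∂μ = -c := by
    rw [← integral_neg]
    simp only [← neg_mul, neg_sub]
  have hdiv : HasFDerivAt
      (fun t ↦ (∫ x, (E₀ x - E t x) * exp (-E t x) ∂μ) / (∫ x, exp (-E t x) ∂μ))
      (Z⁻¹ • (I₁ - I₀) - (c * (Z ^ 2)⁻¹) • I₀) θ := by
    have := hG'.fun_mul ((hasDerivAt_inv hZ_pos.ne').comp_hasFDerivAt θ hZ')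
    simp only [Function.comp_def, ← div_eq_mul_inv, hG] at this
    refine this.congr_fderiv ?_
    module
  have hdensity₁ : ∫ x, ((E θ x - E₀ x) * (exp (-E θ x) / Z)) • D x ∂μ = Z⁻¹ • I₁ := by
    rw [← integral_smul]
    refine integral_congr_ae (.of_forall fun x ↦ ?_)
    module
  have hdensity₀ : ∫ x, (exp (-E θ x) / Z) • D x ∂μ = Z⁻¹ • I₀ := by
    rw [← integral_smul]
    refine integral_congr_ae (.of_forall fun x ↦ ?_)
    module
  have hmean : ∫ x, (E θ x - E₀ x) * (exp (-E θ x) / Z) ∂μ = Z⁻¹ * c := by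
    rw [← integral_const_mul]
    refine integral_congr_ae (.of_forall fun x ↦ ?_)
    ring
  refine (hdiv.sub (hZ'.log hZ_pos.ne')).congr_fderiv ?_
  change Z⁻¹ • (I₁ - I₀) - (c * (Z ^ 2)⁻¹) • I₀ - Z⁻¹ • -I₀ = _
  rw [hdensity₁, hdensity₀, hmean]
  match_scalars
  · field_simp
  · field_simp
    ring

end ParametricGibbs

theorem toDual_symm_integral {α P : Type*} [MeasurableSpace α] {μ : Measure α}
    [NormedAddCommGroup P] [InnerProductSpace ℝ P] [CompleteSpace P] (L : α → StrongDual ℝ P) :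
    (toDual ℝ P).symm (∫ x, L x ∂μ) = ∫ x, (toDual ℝ P).symm (L x) ∂μ :=
  ((toDual ℝ P).symm.toContinuousLinearEquiv.integral_comp_comm L).symm

section EnergyBasedModel

variable {dx dθ : ℕ}

theorem integral_ebmDensity (En : EuclideanSpace ℝ (Fin dθ) → EuclideanSpace ℝ (Fin dx) → ℝ)
    (t : EuclideanSpace ℝ (Fin dθ)) (hZ : Integrable fun x ↦ exp (-En t x)) :
    ∫ x, ebmDensity En t x = 1 :=
  (integral_div _ _).trans (div_self (integral_exp_pos hZ).ne')

theorem log_ebmDensity_div_refDensity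
    (En : EuclideanSpace ℝ (Fin dθ) → EuclideanSpace ℝ (Fin dx) → ℝ)
    (E₀ : EuclideanSpace ℝ (Fin dx) → ℝ) (t : EuclideanSpace ℝ (Fin dθ))
    (x : EuclideanSpace ℝ (Fin dx)) (hZ : 0 < ∫ y, exp (-En t y))
    (hZ₀ : 0 < ∫ y, exp (-E₀ y)) :
    log (ebmDensity En t x / refDensity E₀ x) =
      E₀ x - En t x - log (∫ y, exp (-En t y)) + log (∫ y, exp (-E₀ y)) := by
  rw [ebmDensity, refDensity, log_div (by positivity) (by positivity),
    log_div (exp_pos _).ne' hZ.ne', log_div (exp_pos _).ne' hZ₀.ne', log_exp, log_exp]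
  ring

theorem integral_ebmDensity_mul_log_div_refDensity
    (En : EuclideanSpace ℝ (Fin dθ) → EuclideanSpace ℝ (Fin dx) → ℝ)
    (E₀ : EuclideanSpace ℝ (Fin dx) → ℝ) (t : EuclideanSpace ℝ (Fin dθ))
    (hZ : Integrable fun x ↦ exp (-En t x)) (hZ₀ : Integrable fun x ↦ exp (-E₀ x))
    (hint : Integrable fun x ↦ (E₀ x - En t x) * exp (-En t x)) :
    ∫ x, ebmDensity En t x * log (ebmDensity En t x / refDensity E₀ x) =
      (∫ x, (E₀ x - En t x) * exp (-En t x)) / (∫ x, exp (-En t x)) -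
        log (∫ x, exp (-En t x)) + log (∫ x, exp (-E₀ x)) := by
  set Z := ∫ x, exp (-En t x)
  set c := log (∫ x, exp (-E₀ x)) - log Z
  simp_rw [log_ebmDensity_div_refDensity En E₀ t _ (integral_exp_pos hZ) (integral_exp_pos hZ₀)]
  calc ∫ x, ebmDensity En t x * (E₀ x - En t x - log Z + log (∫ x, exp (-E₀ x)))
      = ∫ x, ((E₀ x - En t x) * exp (-En t x) / Z + c * ebmDensity En t x) := by
        refine integral_congr_ae (.of_forall fun x ↦ ?_)
        simp only [ebmDensity, c, Z]
        ring
    _ = (∫ x, (E₀ x - En t x) * exp (-En t x)) / Z - log Z + log (∫ x, exp (-E₀ x)) := by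
        have hp : Integrable (ebmDensity En t) := hZ.div_const Z
        rw [integral_add (hint.div_const Z) (hp.const_mul c), integral_div,
          integral_const_mul, integral_ebmDensity En t hZ]
        ring

end EnergyBasedModel

theorem ebm_gradient_reverse_kl_general
    {dx dθ : ℕ}
    (En : EuclideanSpace ℝ (Fin dθ) → EuclideanSpace ℝ (Fin dx) → ℝ)
    (hEn_meas : ∀ t, Measurable (En t))
    (hZ : ∀ t, Integrable fun x => Real.exp (-En t x))
    (E₀ : EuclideanSpace ℝ (Fin dx) → ℝ)
    (hE₀_meas : Measurable E₀)
    (hZ₀ : Integrable fun x => Real.exp (-E₀ x))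
    (θ : EuclideanSpace ℝ (Fin dθ))
    (O : Set (EuclideanSpace ℝ (Fin dθ))) (hO : O ∈ nhds θ)
    (hdiff : ∀ x, ∀ t ∈ O, DifferentiableAt ℝ (fun s => En s x) t)
    (hdiff_int : ∀ t ∈ O, Integrable fun x => (E₀ x - En t x) * Real.exp (-En t x))
    (g₁ g₂ : EuclideanSpace ℝ (Fin dx) → ℝ)
    (hg₁_int : Integrable g₁) (hg₂_int : Integrable g₂)
    (hdomZ : ∀ t ∈ O, ∀ x, ‖gradient (fun s => En s x) t‖ * Real.exp (-En t x) ≤ g₁ x)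
    (hdomKL : ∀ t ∈ O, ∀ x,
      (1 + |E₀ x - En t x|) * ‖gradient (fun s => En s x) t‖ * Real.exp (-En t x) ≤ g₂ x) :
    HasGradientAt
      (fun t => ∫ x, ebmDensity En t x * Real.log (ebmDensity En t x / refDensity E₀ x))
      ((∫ x, ((En θ x - E₀ x) * ebmDensity En θ x) • gradient (fun s => En s x) θ) -
        (∫ x, (En θ x - E₀ x) * ebmDensity En θ x) •
          ∫ x, ebmDensity En θ x • gradient (fun s => En s x) θ) θ := by
  have hθ : θ ∈ O := mem_of_mem_nhds hO
  have hnorm : ∀ t x, ‖gradient (fun s => En s x) t‖ = ‖fderiv ℝ (fun s => En s x) t‖ :=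
    fun _ _ ↦ (toDual ℝ _).symm.norm_map _
  have hD := measurable_fderiv_of_measurable hEn_meas (hdiff · θ hθ)
  have hF := (hasFDerivAt_integral_sub_mul_exp_neg_div_sub_log hO (fun t _ ↦ hZ t) hdiff_int
    hE₀_meas.aestronglyMeasurable (hEn_meas θ).aestronglyMeasurable hD.aestronglyMeasurable
    hdiff hg₁_int hg₂_int (by simpa only [hnorm] using hdomZ)
    (by simpa only [hnorm] using hdomKL)).add_const (log (∫ x, exp (-E₀ x)))
  have hKL : (fun t ↦ ∫ x, ebmDensity En t x * log (ebmDensity En t x / refDensity E₀ x))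
      =ᶠ[𝓝 θ] fun t ↦ (∫ x, (E₀ x - En t x) * exp (-En t x)) / (∫ x, exp (-En t x)) -
        log (∫ x, exp (-En t x)) + log (∫ x, exp (-E₀ x)) := by
    filter_upwards [hO] with t ht
    exact integral_ebmDensity_mul_log_div_refDensity En E₀ t (hZ t) hZ₀ (hdiff_int t ht)
  convert (hF.congr_of_eventuallyEq hKL).hasGradientAt using 1
  rw [map_sub, map_smul, toDual_symm_integral, toDual_symm_integral]
  simp only [map_smul]
  rfl

/-- Gradient of the reverse KL divergence of an EBM from a fixed reference:
`∇_θ KL(π_θ ‖ π₀) = E_{π_θ}[(E_θ − E₀)∇_θE_θ] − E_{π_θ}[E_θ − E₀]·E_{π_θ}[∇_θE_θ]`. -/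
theorem ebm_gradient_reverse_kl
    {dx dθ : ℕ}
    (En : EuclideanSpace ℝ (Fin dθ) → EuclideanSpace ℝ (Fin dx) → ℝ)
    (hEn_meas : ∀ t, Measurable (En t))
    (hZ : ∀ t, Integrable fun x => Real.exp (-En t x))
    (E₀ : EuclideanSpace ℝ (Fin dx) → ℝ)
    (hE₀_meas : Measurable E₀)
    (hZ₀ : Integrable fun x => Real.exp (-E₀ x))
    (θ : EuclideanSpace ℝ (Fin dθ))
    (O : Set (EuclideanSpace ℝ (Fin dθ))) (hO : O ∈ nhds θ)
    (hdiff : ∀ x, ∀ t ∈ O, DifferentiableAt ℝ (fun s => En s x) t)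
    (hKL_fin : ∀ t ∈ O,
      Integrable fun x => ebmDensity En t x * Real.log (ebmDensity En t x / refDensity E₀ x))
    (hdiff_int : ∀ t ∈ O, Integrable fun x => (E₀ x - En t x) * Real.exp (-En t x))
    (g₁ g₂ : EuclideanSpace ℝ (Fin dx) → ℝ)
    (hg₁_int : Integrable g₁) (hg₂_int : Integrable g₂)
    (hdomZ : ∀ t ∈ O, ∀ x, ‖gradient (fun s => En s x) t‖ * Real.exp (-En t x) ≤ g₁ x)
    (hdomKL : ∀ t ∈ O, ∀ x,
      (1 + |E₀ x - En t x|) * ‖gradient (fun s => En s x) t‖ * Real.exp (-En t x) ≤ g₂ x)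
    (hint₁ : Integrable fun x =>
      ((En θ x - E₀ x) * ebmDensity En θ x) • gradient (fun s => En s x) θ)
    (hint₂ : Integrable fun x => ebmDensity En θ x • gradient (fun s => En s x) θ)
    (hint₃ : Integrable fun x => (En θ x - E₀ x) * ebmDensity En θ x) :
    HasGradientAt
      (fun t => ∫ x, ebmDensity En t x * Real.log (ebmDensity En t x / refDensity E₀ x))
      ((∫ x, ((En θ x - E₀ x) * ebmDensity En θ x) • gradient (fun s => En s x) θ) -
        (∫ x, (En θ x - E₀ x) * ebmDensity En θ x) •
          ∫ x, ebmDensity En θ x • gradient (fun s => En s x) θ) θ :=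
  ebm_gradient_reverse_kl_general En hEn_meas hZ E₀ hE₀_meas hZ₀ θ O hO hdiff hdiff_int g₁ g₂
    hg₁_int hg₂_int hdomZ hdomKL
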